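/- Every symmetric mean M : I^p → I that is three times continuously differentiable on an open neighborhood of the diagonal is residual: for every compact subinterval J ⊂ I there exist λ, ε > 0 such that |M(x·1 + s) − x − E(s) − (1/2)ξ_M(x)Var(s)| ≤ λ·‖s‖_∞³ for all x ∈ J and all s ∈ ℝ^p with ‖s‖_∞ ≤ ε. -/

import Mathlib

open Set Metric

section AuxT
open Set

lemma taylor2_bound {g g1 g2 g3 : ℝ → ℝ} {C : ℝ}
    (h0 : ∀ t ∈ Icc (0:ℝ) 1, HasDerivAt g (g1 t) t)
    (h1 : ∀ t ∈ Icc (0:ℝ) 1, HasDerivAt g1 (g2 t) t)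
    (h2 : ∀ t ∈ Icc (0:ℝ) 1, HasDerivAt g2 (g3 t) t)
    (hC : ∀ t ∈ Icc (0:ℝ) 1, |g3 t| ≤ C) :
    |g 1 - g 0 - g1 0 - g2 0 / 2| ≤ C / 2 := by
  set ψ : ℝ → ℝ := fun t => g 1 - g t - (1 - t) * g1 t - (1 - t)^2 / 2 * g2 t with hψdef
  have hψ : ∀ t ∈ Icc (0:ℝ) 1, HasDerivAt ψ (-((1-t)^2/2 * g3 t)) t := by
    intro t ht
    have d1 : HasDerivAt (fun t : ℝ => g 1 - g t) (-(g1 t)) t := (h0 t ht).const_sub _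
    have d2 : HasDerivAt (fun t : ℝ => (1 - t) * g1 t) ((-1) * g1 t + (1 - t) * g2 t) t :=
      by
      have := ((hasDerivAt_const t (1:ℝ)).sub (hasDerivAt_id t)).mul (h1 t ht)
      exact this.congr_deriv (by simp only [Pi.sub_apply, id_eq]; ring)
    have d3 : HasDerivAt (fun t : ℝ => (1 - t)^2 / 2 * g2 t)
        ((2 * (1 - t) * (-1)) / 2 * g2 t + (1 - t)^2 / 2 * g3 t) t := by
      have e1 : HasDerivAt (fun t : ℝ => (1 - t)^2 / 2) ((2 * (1 - t) * (-1)) / 2) t := by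
        have := (((hasDerivAt_const t (1:ℝ)).sub (hasDerivAt_id t)).pow 2).div_const 2
        exact this.congr_deriv (by simp only [Pi.sub_apply, id_eq]; ring)
      exact e1.mul (h2 t ht)
    have := (d1.sub d2).sub d3
    exact this.congr_deriv (by ring)
  have key := norm_image_sub_le_of_norm_deriv_le_segment'
    (f := ψ) (f' := fun t => -((1-t)^2/2 * g3 t)) (C := C / 2)
    (fun t ht => (hψ t ht).hasDerivWithinAt) ?_ 1 (right_mem_Icc.2 zero_le_one)
  · have hψ1 : ψ 1 = 0 := by simp [hψdef]
    have hψ0 : ψ 0 = g 1 - g 0 - g1 0 - g2 0 / 2 := by simp [hψdef]; ring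
    rw [hψ1, hψ0] at key
    rw [← abs_neg]
    simpa using key
  · intro t ht
    have hC0 : 0 ≤ C := le_trans (abs_nonneg _) (hC 0 (left_mem_Icc.2 zero_le_one))
    have h1t : |(1 - t)^2| ≤ 1 := by
      rw [abs_of_nonneg (sq_nonneg _)]
      nlinarith [ht.1, ht.2]
    calc ‖-((1-t)^2/2 * g3 t)‖ = |(1-t)^2| / 2 * |g3 t| := by
          rw [norm_neg]; rw [Real.norm_eq_abs, abs_mul, abs_div]; norm_num
      _ ≤ 1 / 2 * C := by
          apply mul_le_mul (by linarith) (hC t (Ico_subset_Icc_self ht)) (abs_nonneg _) (by norm_num)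
      _ = C / 2 := by ring
open Set

noncomputable def permCLM (p : ℕ) (σ : Equiv.Perm (Fin p)) : (Fin p → ℝ) →L[ℝ] (Fin p → ℝ) :=
  LinearMap.toContinuousLinearMap (LinearMap.funLeft ℝ ℝ σ)

lemma permCLM_apply (p : ℕ) (σ : Equiv.Perm (Fin p)) (v : Fin p → ℝ) :
    permCLM p σ v = v ∘ σ := rfl

lemma permCLM_const (p : ℕ) (σ : Equiv.Perm (Fin p)) (x : ℝ) :
    permCLM p σ (fun _ => x) = fun _ => x := rfl

lemma permCLM_single (p : ℕ) (σ : Equiv.Perm (Fin p)) (j : Fin p) :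
    permCLM p σ (Pi.single j 1) = Pi.single (σ.symm j) (1:ℝ) := by
  funext k
  simp only [permCLM_apply, Function.comp_apply, Pi.single_apply]
  congr 1
  simp [Equiv.apply_eq_iff_eq_symm_apply, eq_iff_iff]

lemma norm_permCLM (p : ℕ) (σ : Equiv.Perm (Fin p)) (v : Fin p → ℝ) :
    ‖permCLM p σ v‖ = ‖v‖ := by
  rw [permCLM_apply]
  apply le_antisymm
  · exact (pi_norm_le_iff_of_nonneg (norm_nonneg v)).2 fun i => norm_le_pi_norm v (σ i)
  · refine (pi_norm_le_iff_of_nonneg (norm_nonneg (v ∘ σ))).2 fun i => ?_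
    simpa using norm_le_pi_norm (v ∘ σ) (σ.symm i)

end AuxT

noncomputable instance instNACGCLM2 (p : ℕ) :
    NormedAddCommGroup ((Fin p → ℝ) →L[ℝ] (Fin p → ℝ) →L[ℝ] ℝ) :=
  ContinuousLinearMap.toNormedAddCommGroup

noncomputable instance instNSCLM2 (p : ℕ) :
    NormedSpace ℝ ((Fin p → ℝ) →L[ℝ] (Fin p → ℝ) →L[ℝ] ℝ) :=
  ContinuousLinearMap.toNormedSpace

noncomputable instance instNACGCLM3 (p : ℕ) :
    NormedAddCommGroup ((Fin p → ℝ) →L[ℝ] (Fin p → ℝ) →L[ℝ] (Fin p → ℝ) →L[ℝ] ℝ) :=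
  ContinuousLinearMap.toNormedAddCommGroup

noncomputable instance instNSCLM3 (p : ℕ) :
    NormedSpace ℝ ((Fin p → ℝ) →L[ℝ] (Fin p → ℝ) →L[ℝ] (Fin p → ℝ) →L[ℝ] ℝ) :=
  ContinuousLinearMap.toNormedSpace

set_option maxHeartbeats 1000000 in
/-- every symmetric locally C³ mean is residual (with exponent 3). -/
theorem locally_C3_is_residual (p : ℕ) (hp : 2 ≤ p) (I : Set ℝ) (hIopen : IsOpen I)
    (hIconn : I.OrdConnected) (M : (Fin p → ℝ) → ℝ)
    (hmean : ∀ y : Fin p → ℝ, (∀ i, y i ∈ I) →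
      M y ∈ I ∧ (∃ i, y i ≤ M y) ∧ (∃ i, M y ≤ y i))
    (hsym : ∀ (y : Fin p → ℝ) (σ : Equiv.Perm (Fin p)), M (y ∘ σ) = M y)
    (U : Set (Fin p → ℝ)) (hU : IsOpen U) (hdiag : ∀ x ∈ I, (fun _ => x) ∈ U)
    (hC3 : ContDiffOn ℝ 3 M U) :
    ∀ J : Set ℝ, J ⊆ I → IsCompact J → J.OrdConnected →
      ∃ lam eps : ℝ, 0 < lam ∧ 0 < eps ∧
        ∀ x ∈ J, ∀ s : Fin p → ℝ, ‖s‖ ≤ eps →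
          |M (fun i => x + s i) - x - (∑ i, s i) / p
            - (1 / 2)
              * (-(p : ℝ)^2 * fderiv ℝ (fun z => fderiv ℝ M z (Pi.single (⟨1, hp⟩ : Fin p) 1))
                  (fun _ => x) (Pi.single (⟨0, by omega⟩ : Fin p) 1))
              * ((∑ i, (s i)^2) / p - ((∑ i, s i) / p)^2)|
          ≤ lam * ‖s‖ ^ 3 := by
  intro J hJI hJcomp _
  have hp0 : (0:ℝ) < p := by positivity
  set c : ℝ → (Fin p → ℝ) := fun x _ => x with hc
  -- compact neighborhood of the diagonal over J
  have hK0 : IsCompact (c '' J) := hJcomp.image (continuous_pi fun _ => continuous_id)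
  have hK0U : c '' J ⊆ U := by rintro _ ⟨x, hx, rfl⟩; exact hdiag x (hJI hx)
  obtain ⟨δ, hδpos, hδsub⟩ := hK0.exists_cthickening_subset_open hU hK0U
  set K := cthickening δ (c '' J) with hK
  have hKU : K ⊆ U := hδsub
  have hKcomp : IsCompact K := hK0.cthickening
  have hmemK : ∀ x ∈ J, ∀ u : Fin p → ℝ, ‖u‖ ≤ δ → c x + u ∈ K := by
    intro x hx u hu
    refine mem_cthickening_of_dist_le _ (c x) δ _ ⟨x, hx, rfl⟩ ?_
    rw [dist_eq_norm]; simpa using hu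
  -- derivatives
  set A1 := fderiv ℝ M with hA1def
  set A2 := fderiv ℝ A1 with hA2def
  set A3 := fderiv ℝ A2 with hA3def
  have hA1 : ContDiffOn ℝ 2 A1 U := hC3.fderiv_of_isOpen hU (by norm_num)
  have hA2 : ContDiffOn ℝ 1 A2 U := hA1.fderiv_of_isOpen hU (by norm_num)
  have hA3c : ContinuousOn A3 U := hA2.continuousOn_fderiv_of_isOpen hU le_rfl
  have hM' : ∀ z ∈ U, HasFDerivAt M (A1 z) z := fun z hz =>
    ((hC3.differentiableOn (by norm_num) z hz).differentiableAt (hU.mem_nhds hz)).hasFDerivAt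
  have hA1' : ∀ z ∈ U, HasFDerivAt A1 (A2 z) z := fun z hz =>
    ((hA1.differentiableOn (by norm_num) z hz).differentiableAt (hU.mem_nhds hz)).hasFDerivAt
  have hA2' : ∀ z ∈ U, HasFDerivAt A2 (A3 z) z := fun z hz =>
    ((hA2.differentiableOn one_ne_zero z hz).differentiableAt (hU.mem_nhds hz)).hasFDerivAt
  obtain ⟨C0, hC0⟩ := hKcomp.exists_bound_of_continuousOn (hA3c.mono hKU)
  set C := max C0 0 with hCdef
  have hCnn : 0 ≤ C := le_max_right _ _
  have hCK : ∀ z ∈ K, ‖A3 z‖ ≤ C := fun z hz => le_trans (hC0 z hz) (le_max_left _ _)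
  -- value of M on the diagonal
  have fact1 : ∀ y ∈ I, M (c y) = y := by
    intro y hy
    obtain ⟨-, ⟨i, h1⟩, ⟨j, h2⟩⟩ := hmean (c y) (fun _ => hy)
    exact le_antisymm h2 h1
  -- first derivative on the diagonal
  have fact2 : ∀ y ∈ I, ∀ v : Fin p → ℝ, A1 (c y) v = (∑ i, v i) / p := by
    intro y hy
    have hcy : c y ∈ U := hdiag y hy
    have hperm : ∀ σ : Equiv.Perm (Fin p), (A1 (c y)).comp (permCLM p σ) = A1 (c y) := by
      intro σ
      have hMy : HasFDerivAt M (A1 (c y)) (permCLM p σ (c y)) := hM' (c y) hcy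
      have h1 := hMy.comp (c y) ((permCLM p σ).hasFDerivAt)
      have h2 : (M ∘ (permCLM p σ)) = M := funext fun z => hsym z σ
      rw [h2] at h1
      exact h1.unique (hM' (c y) hcy)
    have hss : ∀ i j : Fin p, A1 (c y) (Pi.single i 1) = A1 (c y) (Pi.single j 1) := by
      intro i j
      have h := DFunLike.congr_fun (hperm (Equiv.swap i j)) (Pi.single j 1)
      rw [ContinuousLinearMap.comp_apply, permCLM_single] at h
      simpa [Equiv.symm_swap, Equiv.swap_apply_right] using h
    have hone : A1 (c y) (fun _ => (1:ℝ)) = 1 := by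
      have hline : HasDerivAt (fun t : ℝ => c y + t • (fun _ => (1:ℝ))) (fun _ => (1:ℝ)) 0 := by
        simpa using ((hasDerivAt_id (0:ℝ)).smul_const (fun _ => (1:ℝ))).const_add (c y)
      have hMc : HasFDerivAt M (A1 (c y)) ((fun t : ℝ => c y + t • (fun _ => (1:ℝ))) 0) := by
        simpa using hM' (c y) hcy
      have hD := hMc.comp_hasDerivAt 0 hline
      have hev : (fun t : ℝ => (M ∘ fun t : ℝ => c y + t • (fun _ => (1:ℝ))) t)
          =ᶠ[nhds 0] (fun t => y + t) := by
        have hopen : ∀ᶠ t in nhds (0:ℝ), y + t ∈ I := by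
          have : Continuous (fun t : ℝ => y + t) := continuous_const.add continuous_id
          exact this.continuousAt.preimage_mem_nhds (by simpa using hIopen.mem_nhds (by simpa using hy))
        filter_upwards [hopen] with t ht
        have heq : (c y + t • (fun _ => (1:ℝ))) = c (y + t) := funext fun i => by
          simp [hc]
        simp only [Function.comp_apply, heq]
        exact fact1 (y + t) ht
      have h1' : HasDerivAt (fun t : ℝ => (M ∘ fun t : ℝ => c y + t • (fun _ => (1:ℝ))) t) 1 0 :=
        (((hasDerivAt_id (0:ℝ)).const_add y)).congr_of_eventuallyEq hev
      exact hD.unique h1'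
    set i0 : Fin p := ⟨0, by omega⟩ with hi0
    have hsum : (1:ℝ) = (p:ℝ) * A1 (c y) (Pi.single i0 1) := by
      have h1 : (fun _ => (1:ℝ)) = ∑ i : Fin p, Pi.single i (1:ℝ) := by
        exact (Finset.univ_sum_single (fun _ => (1:ℝ))).symm
      calc (1:ℝ) = A1 (c y) (fun _ => (1:ℝ)) := hone.symm
        _ = ∑ i : Fin p, A1 (c y) (Pi.single i 1) := by rw [h1, map_sum]
        _ = ∑ _i : Fin p, A1 (c y) (Pi.single i0 1) := Finset.sum_congr rfl fun i _ => hss i i0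
        _ = (p:ℝ) * A1 (c y) (Pi.single i0 1) := by
            rw [Finset.sum_const, Finset.card_univ, Fintype.card_fin, nsmul_eq_mul]
    intro v
    have hv : v = ∑ i : Fin p, (v i) • (Pi.single i 1 : Fin p → ℝ) := by
      conv_lhs => rw [← Finset.univ_sum_single v]
      exact Finset.sum_congr rfl fun i _ => by rw [← Pi.single_smul, smul_eq_mul, mul_one]
    calc A1 (c y) v = ∑ i : Fin p, (v i) * A1 (c y) (Pi.single i 1) := by
          conv_lhs => rw [hv, map_sum]
          exact Finset.sum_congr rfl fun i _ => by rw [map_smul, smul_eq_mul]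
      _ = ∑ i : Fin p, (v i) * A1 (c y) (Pi.single i0 1) :=
          Finset.sum_congr rfl fun i _ => by rw [hss i i0]
      _ = (∑ i, v i) / p := by
          rw [← Finset.sum_mul]
          have : A1 (c y) (Pi.single i0 1) = 1 / p := by
            field_simp at hsum ⊢
            linarith [hsum]
          rw [this]; ring

  -- set up final constants
  refine ⟨C/2 + 1, δ, by positivity, hδpos, ?_⟩
  intro x hxJ s hs
  have hxI : x ∈ I := hJI hxJ
  have hcx : c x ∈ U := hdiag x hxI
  -- permutation invariance of the Hessian at c x
  have hperm2 : ∀ σ : Equiv.Perm (Fin p), ∀ u v : Fin p → ℝ,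
      A2 (c x) (permCLM p σ u) (permCLM p σ v) = A2 (c x) u v := by
    intro σ u v
    obtain ⟨r, hrpos, hrU⟩ := Metric.isOpen_iff.1 hU (c x) hcx
    set Pσ := permCLM p σ with hPσ
    have hPc : Pσ (c x) = c x := rfl
    have hball : ∀ z ∈ ball (c x) r, Pσ z ∈ ball (c x) r := by
      intro z hz
      rw [mem_ball, dist_eq_norm] at hz ⊢
      have h1 : Pσ z - c x = Pσ (z - c x) := by rw [map_sub, hPc]
      rw [h1, hPσ, norm_permCLM]
      exact hz
    have hid : ∀ z ∈ ball (c x) r, A1 z = (A1 (Pσ z)).comp Pσ := by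
      intro z hz
      have hMz : HasFDerivAt M (A1 (Pσ z)) (Pσ z) := hM' _ (hrU (hball z hz))
      have h1 := hMz.comp z Pσ.hasFDerivAt
      have h2 : (M ∘ Pσ) = M := funext fun w => hsym w σ
      rw [h2] at h1
      exact (hM' z (hrU hz)).unique h1
    set R : ((Fin p → ℝ) →L[ℝ] ℝ) →L[ℝ] ((Fin p → ℝ) →L[ℝ] ℝ) :=
      (ContinuousLinearMap.compL ℝ (Fin p → ℝ) (Fin p → ℝ) ℝ).flip Pσ with hRdef
    have hR : ∀ W : (Fin p → ℝ) →L[ℝ] ℝ, R W = W.comp Pσ := fun W => by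
      rw [hRdef, ContinuousLinearMap.flip_apply, ContinuousLinearMap.compL_apply]
    have hG : HasFDerivAt (fun z => R (A1 (Pσ z))) (R.comp ((A2 (c x)).comp Pσ)) (c x) := by
      have h1 : HasFDerivAt A1 (A2 (c x)) (Pσ (c x)) := by rw [hPc]; exact hA1' (c x) hcx
      have h2 := h1.comp (c x) Pσ.hasFDerivAt
      exact R.hasFDerivAt.comp (c x) h2
    have hevq : A1 =ᶠ[nhds (c x)] (fun z => R (A1 (Pσ z))) := by
      filter_upwards [ball_mem_nhds (c x) hrpos] with z hz
      rw [hR, ← hid z hz]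
    have h3 : HasFDerivAt A1 (R.comp ((A2 (c x)).comp Pσ)) (c x) :=
      hG.congr_of_eventuallyEq hevq
    have h4 := (hA1' (c x) hcx).unique h3
    have h5 := DFunLike.congr_fun h4 u
    calc A2 (c x) (Pσ u) (Pσ v) = ((A2 (c x) (Pσ u)).comp Pσ) v :=
        (ContinuousLinearMap.comp_apply _ _ _).symm
      _ = R (A2 (c x) (Pσ u)) v := by rw [hR]
      _ = (R.comp ((A2 (c x)).comp Pσ)) u v := by
          rw [ContinuousLinearMap.comp_apply, ContinuousLinearMap.comp_apply]
      _ = A2 (c x) u v := by rw [← h5]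
  set i0 : Fin p := ⟨0, by omega⟩ with hi0
  set i1 : Fin p := ⟨1, hp⟩ with hi1
  set a := A2 (c x) (Pi.single i0 1) (Pi.single i0 1) with hadef
  set b := A2 (c x) (Pi.single i0 1) (Pi.single i1 1) with hbdef
  have hdiagentry : ∀ i : Fin p, A2 (c x) (Pi.single i 1) (Pi.single i 1) = a := by
    intro i
    have h := hperm2 (Equiv.swap i0 i) (Pi.single i 1) (Pi.single i 1)
    rw [permCLM_single] at h
    simp only [Equiv.symm_swap, Equiv.swap_apply_right] at h
    rw [hadef, ← h]
  have hoffentry : ∀ i j : Fin p, i ≠ j → A2 (c x) (Pi.single i 1) (Pi.single j 1) = b := by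
    intro i j hij
    set τ : Equiv.Perm (Fin p) :=
      (Equiv.swap i0 i).trans (Equiv.swap ((Equiv.swap i0 i) i1) j) with hτ
    have hτ0 : τ i0 = i := by
      rw [hτ]
      simp only [Equiv.trans_apply, Equiv.swap_apply_left]
      apply Equiv.swap_apply_of_ne_of_ne
      · intro hcon
        have : (Equiv.swap i0 i) i0 = (Equiv.swap i0 i) i1 := by
          rw [Equiv.swap_apply_left]; exact hcon
        have h01 : i0 ≠ i1 := by simp [hi0, hi1, Fin.ext_iff]
        exact h01 ((Equiv.swap i0 i).injective this)
      · exact hij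
    have hτ1 : τ i1 = j := by
      rw [hτ]
      simp only [Equiv.trans_apply, Equiv.swap_apply_left]
    have h := hperm2 τ.symm (Pi.single i0 1) (Pi.single i1 1)
    rw [permCLM_single, permCLM_single] at h
    simp only [Equiv.symm_symm] at h
    rw [hτ0, hτ1] at h
    rw [hbdef, ← h]

  -- second derivative along the diagonal direction vanishes
  have hB11 : A2 (c x) (fun _ => (1:ℝ)) (fun _ => (1:ℝ)) = 0 := by
    have hline : HasDerivAt (fun t : ℝ => c x + t • (fun _ => (1:ℝ))) (fun _ => (1:ℝ)) 0 := by
      simpa using ((hasDerivAt_id (0:ℝ)).smul_const (fun _ => (1:ℝ))).const_add (c x)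
    have hA1cx : HasFDerivAt A1 (A2 (c x)) ((fun t : ℝ => c x + t • (fun _ => (1:ℝ))) 0) := by
      simpa using hA1' (c x) hcx
    have hΦ := hA1cx.comp_hasDerivAt 0 hline
    have hk : HasDerivAt (fun t : ℝ => A1 (c x + t • (fun _ => (1:ℝ))) (fun _ => (1:ℝ)))
        (A2 (c x) (fun _ => (1:ℝ)) (fun _ => (1:ℝ))) 0 := by
      have h2 := hΦ.clm_apply (hasDerivAt_const (0:ℝ) (fun _ => (1:ℝ)))
      simpa [Function.comp] using h2
    have hev : (fun t : ℝ => A1 (c x + t • (fun _ => (1:ℝ))) (fun _ => (1:ℝ)))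
        =ᶠ[nhds (0:ℝ)] (fun _ => 1) := by
      have hopen : ∀ᶠ t in nhds (0:ℝ), x + t ∈ I := by
        have hco : Continuous (fun t : ℝ => x + t) := continuous_const.add continuous_id
        exact hco.continuousAt.preimage_mem_nhds
          (by simpa using hIopen.mem_nhds (by simpa using hxI))
      filter_upwards [hopen] with t ht
      have heq : (c x + t • (fun _ => (1:ℝ))) = c (x + t) := funext fun i => by simp [hc]
      rw [heq, fact2 (x + t) ht]
      rw [Finset.sum_const, Finset.card_univ, Fintype.card_fin, nsmul_eq_mul, mul_one]
      field_simp
    have h0 : HasDerivAt (fun t : ℝ => A1 (c x + t • (fun _ => (1:ℝ))) (fun _ => (1:ℝ))) 0 0 :=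
      (hasDerivAt_const (0:ℝ) (1:ℝ)).congr_of_eventuallyEq hev
    exact hk.unique h0
  -- quadratic form of the Hessian
  have hsingle_decomp : ∀ v : Fin p → ℝ,
      v = ∑ i : Fin p, (v i) • (Pi.single i 1 : Fin p → ℝ) := by
    intro v
    conv_lhs => rw [← Finset.univ_sum_single v]
    exact Finset.sum_congr rfl fun i _ => by rw [← Pi.single_smul, smul_eq_mul, mul_one]
  have hquad : ∀ v : Fin p → ℝ, A2 (c x) v v
      = (a - b) * (∑ i, (v i)^2) + b * (∑ i, v i)^2 := by
    intro v
    have hHij : ∀ i j : Fin p, A2 (c x) (Pi.single i 1) (Pi.single j 1)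
        = b + (if i = j then a - b else 0) := by
      intro i j
      by_cases hij : i = j
      · subst hij; rw [hdiagentry]; simp
      · rw [hoffentry i j hij]; simp [hij]
    have expand1 : A2 (c x) v = ∑ i : Fin p, (v i) • A2 (c x) (Pi.single i 1) := by
      conv_lhs => rw [hsingle_decomp v, map_sum]
      exact Finset.sum_congr rfl fun i _ => by rw [map_smul]
    have expand : A2 (c x) v v
        = ∑ i : Fin p, ∑ j : Fin p, v i * v j * (A2 (c x) (Pi.single i 1) (Pi.single j 1)) := by
      rw [expand1, ContinuousLinearMap.sum_apply]
      refine Finset.sum_congr rfl fun i _ => ?_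
      rw [ContinuousLinearMap.smul_apply]
      have expin : A2 (c x) (Pi.single i 1) v
          = ∑ j : Fin p, v j * (A2 (c x) (Pi.single i 1) (Pi.single j 1)) := by
        conv_lhs => rw [hsingle_decomp v, map_sum]
        exact Finset.sum_congr rfl fun j _ => by rw [map_smul, smul_eq_mul]
      rw [expin, smul_eq_mul, Finset.mul_sum]
      exact Finset.sum_congr rfl fun j _ => by ring
    rw [expand]
    have hrow : ∀ i : Fin p, ∑ j : Fin p, v i * v j * (A2 (c x) (Pi.single i 1) (Pi.single j 1))
        = (∑ j : Fin p, v i * v j) * b + (v i)^2 * (a - b) := by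
      intro i
      simp only [hHij, mul_add]
      rw [Finset.sum_add_distrib, ← Finset.sum_mul]
      congr 1
      simp only [mul_ite, mul_zero]
      rw [Finset.sum_ite_eq]
      simp only [Finset.mem_univ, if_true]
      ring
    rw [Finset.sum_congr rfl fun i _ => hrow i, Finset.sum_add_distrib,
      ← Finset.sum_mul, ← Finset.sum_mul, ← Finset.sum_mul_sum]
    ring
  -- the Hessian entries relation
  have hab : (a - b) * (p:ℝ) + b * (p:ℝ)^2 = 0 := by
    have h := hquad (fun _ => (1:ℝ))
    rw [hB11] at h
    simp only [one_pow, Finset.sum_const, Finset.card_univ, Fintype.card_fin,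
      nsmul_eq_mul, mul_one] at h
    linarith [h]
  -- identification of the fderiv term in the statement
  have hbterm : fderiv ℝ (fun z => A1 z (Pi.single i1 1)) (c x) (Pi.single i0 1) = b := by
    have hF := (hA1' (c x) hcx).clm_apply
      (hasFDerivAt_const (Pi.single i1 (1:ℝ) : Fin p → ℝ) (c x))
    rw [hF.fderiv]
    simp [ContinuousLinearMap.flip_apply, hbdef]

  -- the path t ↦ c x + t • s
  have hzK : ∀ t ∈ Icc (0:ℝ) 1, c x + t • s ∈ K := by
    intro t ht
    apply hmemK x hxJ
    rw [norm_smul]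
    calc ‖t‖ * ‖s‖ ≤ 1 * δ := by
          apply mul_le_mul ?_ hs (norm_nonneg s) zero_le_one
          rw [Real.norm_eq_abs, abs_of_nonneg ht.1]; exact ht.2
      _ = δ := one_mul δ
  have hzU : ∀ t ∈ Icc (0:ℝ) 1, c x + t • s ∈ U := fun t ht => hKU (hzK t ht)
  have hlin : ∀ t : ℝ, HasDerivAt (fun t : ℝ => c x + t • s) s t := by
    intro t; simpa using ((hasDerivAt_id t).smul_const s).const_add (c x)
  set g : ℝ → ℝ := fun t => M (c x + t • s) with hgdef
  set g1 : ℝ → ℝ := fun t => A1 (c x + t • s) s with hg1def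
  set g2 : ℝ → ℝ := fun t => A2 (c x + t • s) s s with hg2def
  set g3 : ℝ → ℝ := fun t => A3 (c x + t • s) s s s with hg3def
  have hg : ∀ t ∈ Icc (0:ℝ) 1, HasDerivAt g (g1 t) t := by
    intro t ht
    have h1 : HasFDerivAt M (A1 (c x + t • s)) ((fun t : ℝ => c x + t • s) t) :=
      hM' _ (hzU t ht)
    exact h1.comp_hasDerivAt t (hlin t)
  have hΦ1 : ∀ t ∈ Icc (0:ℝ) 1,
      HasDerivAt (fun t : ℝ => A1 (c x + t • s)) (A2 (c x + t • s) s) t := by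
    intro t ht
    have h1 : HasFDerivAt A1 (A2 (c x + t • s)) ((fun t : ℝ => c x + t • s) t) :=
      hA1' _ (hzU t ht)
    have := h1.comp_hasDerivAt t (hlin t)
    exact this
  have hg1 : ∀ t ∈ Icc (0:ℝ) 1, HasDerivAt g1 (g2 t) t := by
    intro t ht
    have := (hΦ1 t ht).clm_apply (hasDerivAt_const t s)
    simpa using this
  have hΦ2 : ∀ t ∈ Icc (0:ℝ) 1,
      HasDerivAt (fun t : ℝ => A2 (c x + t • s)) (A3 (c x + t • s) s) t := by
    intro t ht
    have h1 : HasFDerivAt A2 (A3 (c x + t • s)) ((fun t : ℝ => c x + t • s) t) :=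
      hA2' _ (hzU t ht)
    have := h1.comp_hasDerivAt t (hlin t)
    exact this
  have hΦ2s : ∀ t ∈ Icc (0:ℝ) 1,
      HasDerivAt (fun t : ℝ => A2 (c x + t • s) s) (A3 (c x + t • s) s s) t := by
    intro t ht
    have := (hΦ2 t ht).clm_apply (hasDerivAt_const t s)
    simpa using this
  have hg2 : ∀ t ∈ Icc (0:ℝ) 1, HasDerivAt g2 (g3 t) t := by
    intro t ht
    have := (hΦ2s t ht).clm_apply (hasDerivAt_const t s)
    simpa using this
  have hg3bound : ∀ t ∈ Icc (0:ℝ) 1, |g3 t| ≤ C * ‖s‖^3 := by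
    intro t ht
    have hz := hzK t ht
    calc |g3 t| = ‖A3 (c x + t • s) s s s‖ := (Real.norm_eq_abs _).symm
      _ ≤ ‖A3 (c x + t • s) s s‖ * ‖s‖ := ContinuousLinearMap.le_opNorm _ s
      _ ≤ (‖A3 (c x + t • s) s‖ * ‖s‖) * ‖s‖ := by
          gcongr
          exact ContinuousLinearMap.le_opNorm _ s
      _ ≤ ((‖A3 (c x + t • s)‖ * ‖s‖) * ‖s‖) * ‖s‖ := by
          gcongr
          exact ContinuousLinearMap.le_opNorm _ s
      _ ≤ ((C * ‖s‖) * ‖s‖) * ‖s‖ := by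
          gcongr
          exact hCK _ hz
      _ = C * ‖s‖^3 := by ring
  have key := taylor2_bound hg hg1 hg2 hg3bound
  -- values at 0
  have hc0 : c x + (0:ℝ) • s = c x := by simp
  have hg0 : g 0 = x := by
    rw [hgdef]; simp only [hc0]; exact fact1 x hxI
  have hg10 : g1 0 = (∑ i, s i) / p := by
    rw [hg1def]; simp only [hc0]; exact fact2 x hxI s
  have hg20 : g2 0 = A2 (c x) s s := by
    rw [hg2def]; simp only [hc0]
  have hgoal1 : M (fun i => x + s i) = g 1 := by
    rw [hgdef]; congr 1; funext i; simp [hc]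
  have hab' : a - b = -b * (p:ℝ) := by
    have hpne : (p:ℝ) ≠ 0 := ne_of_gt hp0
    have h2 : ((a - b) + b * (p:ℝ)) * (p:ℝ) = 0 := by linear_combination hab
    rcases mul_eq_zero.1 h2 with h3 | h3
    · linarith
    · exact absurd h3 hpne
  have final_bound : |g 1 - g 0 - g1 0 - g2 0 / 2| ≤ (C/2 + 1) * ‖s‖^3 := by
    refine le_trans key ?_
    have hsn : (0:ℝ) ≤ ‖s‖^3 := by positivity
    nlinarith [hsn, hCnn]
  have hF : fderiv ℝ (fun z => A1 z (Pi.single (⟨1, hp⟩ : Fin p) 1)) (fun _ => x)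
      (Pi.single (⟨0, by omega⟩ : Fin p) 1) = b := hbterm
  convert final_bound using 2
  rw [← hgoal1, hg0, hg10, hg20, hF, hquad s, hab']
  have hpne : (p:ℝ) ≠ 0 := ne_of_gt hp0
  field_simp
  ring
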